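/- In an infinite stream formed by concatenating codewords of length m over {0,1,2,3}, each distinct from the all-0 and all-3 words, each avoiding pattern (3,0,3), and separated by single bridging symbols (3 if both adjacent codeword-edge symbols are 3, else 0), the maximum possible run of identical consecutive symbols is 2m - 1. -/

import Mathlib

/-!
A run lying inside one codeword has length at most `m`. A run that reaches a bridging symbol
consists of `0`s or of `3`s, and a codeword is neither all `0` nor all `3`, so such a run cannot
swallow a whole codeword: it is at most a proper suffix of one codeword, the bridge, and a proper
prefix of the next, hence of length at most `(m - 1) + 1 + (m - 1)`. The bound is attained by the
run of `0`s in the stream of `1 0 ⋯ 0` and `0 ⋯ 0 1`.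
-/

/-- Bridging symbol: 3 if both adjacent codeword-edge symbols are 3, else 0. -/
def bridge (x y : Fin 4) : Fin 4 := if x = 3 ∧ y = 3 then 3 else 0

/-- The stream obtained by concatenating codewords separated by single bridging symbols. -/
def stream : List (List (Fin 4)) → List (Fin 4)
  | [] => []
  | [w] => w
  | w :: ws => w ++ bridge (w.getLastD 0) ((stream ws).headD 0) :: stream ws

/-- Valid self-clocked codeword: length `m`, avoids (3,0,3), not all-0, not all-3. -/
def ValidWord (m : ℕ) (w : List (Fin 4)) : Prop :=
  w.length = m ∧ ¬ [3, 0, 3] <:+: w ∧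
    w ≠ List.replicate m (0 : Fin 4) ∧ w ≠ List.replicate m (3 : Fin 4)

namespace List

variable {α : Type*} {l w x : List α} {a : α}

theorem length_lt_of_isSuffix_of_forall_eq (hl : l <:+ w) (hw : w ≠ replicate w.length a)
    (ha : ∀ b ∈ l, b = a) : l.length < w.length :=
  lt_of_le_of_ne hl.length_le fun hlen =>
    hw (eq_replicate_iff.mpr ⟨rfl, hl.eq_of_length hlen ▸ ha⟩)

theorem length_lt_of_isPrefix_of_forall_eq (hl : l <+: x) (hw : w <+: x)
    (hne : w ≠ replicate w.length a) (ha : ∀ b ∈ l, b = a) : l.length < w.length := by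
  by_contra! hlen
  have hwl : w <+: l := prefix_of_prefix_length_le hw hl hlen
  exact hne (eq_replicate_iff.mpr ⟨rfl, fun b hb => ha b (hwl.subset hb)⟩)

end List

theorem bridge_eq_zero_or_eq_three (x y : Fin 4) : bridge x y = 0 ∨ bridge x y = 3 := by
  unfold bridge; split <;> simp

theorem bridge_eq_zero_of_left_ne_three {x : Fin 4} (hx : x ≠ 3) (y : Fin 4) : bridge x y = 0 :=
  if_neg fun h => hx h.1

theorem stream_cons_cons (w w' : List (Fin 4)) (ws : List (List (Fin 4))) :
    stream (w :: w' :: ws) =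
      w ++ bridge (w.getLastD 0) ((stream (w' :: ws)).headD 0) :: stream (w' :: ws) :=
  rfl

theorem prefix_stream_cons (w : List (Fin 4)) : ∀ ws, w <+: stream (w :: ws)
  | [] => List.prefix_refl w
  | _ :: _ => List.prefix_append _ _

namespace ValidWord

variable {m : ℕ} {w : List (Fin 4)}

theorem pos (hw : ValidWord m w) : 0 < m := by
  obtain ⟨hlen, -, hne, -⟩ := hw
  refine Nat.pos_of_ne_zero fun hm => hne ?_
  subst hm
  exact List.eq_nil_of_length_eq_zero hlen

theorem ne_replicate (hw : ValidWord m w) {c : Fin 4} (hc : c = 0 ∨ c = 3) :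
    w ≠ List.replicate w.length c := by
  rw [hw.1]
  rcases hc with rfl | rfl
  exacts [hw.2.2.1, hw.2.2.2]

theorem of_one_mem_of_three_not_mem (hlen : w.length = m) (h1 : 1 ∈ w) (h3 : 3 ∉ w) :
    ValidWord m w :=
  ⟨hlen, fun h => h3 (h.subset (by simp)), fun h => by simp [h] at h1,
    fun h => by simp [h] at h1⟩

end ValidWord

theorem length_append_le_of_forall_eq_of_bridge {m : ℕ} {w w' s p x : List (Fin 4)} {a b : Fin 4}
    (hw : ValidWord m w) (hw' : ValidWord m w') (hb : b = 0 ∨ b = 3) (hw'x : w' <+: x)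
    (hs : s <:+ w) (hp : p <+: b :: x) (ha : ∀ y ∈ s ++ p, y = a) :
    (s ++ p).length ≤ 2 * m - 1 := by
  have hm := hw.pos
  cases p with
  | nil =>
    rw [List.append_nil]
    exact hs.length_le.trans (by rw [hw.1]; omega)
  | cons c p =>
    obtain ⟨rfl, hpx⟩ := List.cons_prefix_cons.mp hp
    have hca : c = a := ha c (by simp)
    subst hca
    have hs_lt := List.length_lt_of_isSuffix_of_forall_eq hs (hw.ne_replicate hb)
      fun y hy => ha y (by simp [hy])
    have hp_lt := List.length_lt_of_isPrefix_of_forall_eq hpx hw'x (hw'.ne_replicate hb)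
      fun y hy => ha y (by simp [hy])
    simp only [List.length_append, List.length_cons, hw.1, hw'.1] at hs_lt hp_lt ⊢
    omega

theorem length_le_of_forall_eq_of_infix_stream {m : ℕ} {a : Fin 4} :
    ∀ {ws : List (List (Fin 4))}, (∀ w ∈ ws, ValidWord m w) →
      ∀ {l : List (Fin 4)}, (∀ y ∈ l, y = a) → l <:+: stream ws → l.length ≤ 2 * m - 1
  | [], _, _, _, hl => by simp [List.infix_nil.mp hl]
  | [w], hws, _, _, hl => by
    have hw := hws w (by simp)
    have hm := hw.pos
    exact hl.length_le.trans (by rw [stream, hw.1]; omega)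
  | w :: w' :: ws, hws, l, ha, hl => by
    have hw := hws w (by simp)
    have hw' := hws w' (by simp)
    have hb := bridge_eq_zero_or_eq_three (w.getLastD 0) ((stream (w' :: ws)).headD 0)
    have hx := prefix_stream_cons w' ws
    rw [stream_cons_cons, List.infix_append_iff, List.infix_cons_iff] at hl
    rcases hl with hl | (hl | hl) | ⟨s, p, rfl, hs, hp⟩
    · have hm := hw.pos
      exact hl.length_le.trans (by rw [hw.1]; omega)
    · exact length_append_le_of_forall_eq_of_bridge hw hw' hb hx List.nil_suffix hl ha
    · exact length_le_of_forall_eq_of_infix_stream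
        (fun v hv => hws v (List.mem_cons_of_mem _ hv)) ha hl
    · exact length_append_le_of_forall_eq_of_bridge hw hw' hb hx hs hp ha

theorem replicate_zero_infix_stream (k : ℕ) :
    List.replicate (2 * k + 1) (0 : Fin 4) <:+:
      stream [1 :: List.replicate k 0, List.replicate k 0 ++ [1]] := by
  have hlast : (1 :: List.replicate k (0 : Fin 4)).getLastD 0 ≠ 3 := by
    cases k <;> simp [List.getLastD_eq_getLast?, List.getLast?_cons, List.getLast?_replicate]
  rw [stream_cons_cons, bridge_eq_zero_of_left_ne_three hlast]
  refine ⟨[1], [1], ?_⟩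
  rw [show 2 * k + 1 = k + (k + 1) by omega, List.replicate_add, List.replicate_succ]
  simp [stream]

theorem stmt_13_general (m : ℕ) :
    (∀ ws : List (List (Fin 4)), (∀ w ∈ ws, ValidWord m w) →
      ∀ l : List (Fin 4), l ≠ [] → (∀ x ∈ l, ∀ y ∈ l, x = y) →
        l <:+: stream ws → l.length ≤ 2 * m - 1) ∧
    (∃ ws : List (List (Fin 4)), (∀ w ∈ ws, ValidWord m w) ∧
      ∃ l : List (Fin 4), (∀ x ∈ l, ∀ y ∈ l, x = y) ∧
        l <:+: stream ws ∧ l.length = 2 * m - 1) := by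
  refine ⟨fun ws hws l hne hconst hl => ?_, ?_⟩
  · obtain ⟨a, l', rfl⟩ := List.exists_cons_of_ne_nil hne
    exact length_le_of_forall_eq_of_infix_stream hws
      (fun y hy => hconst y hy a List.mem_cons_self) hl
  · cases m with
    | zero => exact ⟨[], by simp, [], by simp, List.nil_infix, rfl⟩
    | succ k =>
      refine ⟨_, ?_, _, ?_, replicate_zero_infix_stream k, by simp; omega⟩
      · simp only [List.mem_cons, List.not_mem_nil, or_false]
        rintro w (rfl | rfl) <;>
          exact ValidWord.of_one_mem_of_three_not_mem (by simp) (by simp)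
            (by simp [List.mem_replicate])
      · intro x hx y hy
        rw [List.eq_of_mem_replicate hx, List.eq_of_mem_replicate hy]

theorem stmt_13 (m : ℕ) (hm : 2 ≤ m) :
    (∀ ws : List (List (Fin 4)), (∀ w ∈ ws, ValidWord m w) →
      ∀ l : List (Fin 4), l ≠ [] → (∀ x ∈ l, ∀ y ∈ l, x = y) →
        l <:+: stream ws → l.length ≤ 2 * m - 1) ∧
    (∃ ws : List (List (Fin 4)), (∀ w ∈ ws, ValidWord m w) ∧
      ∃ l : List (Fin 4), (∀ x ∈ l, ∀ y ∈ l, x = y) ∧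
        l <:+: stream ws ∧ l.length = 2 * m - 1) :=
  stmt_13_general m
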